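/- Every interval graph admits a conflict-free 2-coloring. That is, if V is a finite set and each v ∈ V is assigned a closed real interval [a(v), b(v)] with a(v) ≤ b(v), then the simple graph on V in which distinct u, v are adjacent if and only if their intervals intersect (i.e., a(u) ≤ b(v) and a(v) ≤ b(u)) admits a conflict-free 2-coloring. -/

import Mathlib

/-- A conflict-free coloring of `G` with `k` colors: a partial coloring
(uncolored vertices get `none`) such that every vertex has, in its closed
neighborhood, a colored vertex whose color occurs exactly once there. -/
def IsCFColoring {V : Type*} (G : SimpleGraph V) {k : ℕ} (χ : V → Option (Fin k)) : Prop :=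
  ∀ v : V, ∃ u ∈ insert v (G.neighborSet v), (χ u).isSome ∧
    ∀ w ∈ insert v (G.neighborSet v), χ w = χ u → w = u

/-- `G` admits a conflict-free coloring with `k` colors. -/
def HasCFColoring {V : Type*} (G : SimpleGraph V) (k : ℕ) : Prop :=
  ∃ χ : V → Option (Fin k), IsCFColoring G χ

/-- The intersection graph of the closed intervals `[a v, b v]`. -/
def intervalGraph {V : Type*} (a b : V → ℝ) : SimpleGraph V where
  Adj u v := u ≠ v ∧ a u ≤ b v ∧ a v ≤ b u
  symm := by
    constructor
    intro u v ⟨h1, h2, h3⟩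
    exact ⟨h1.symm, h3, h2⟩
  loopless := by
    constructor
    intro v ⟨h1, _⟩
    exact h1 rfl

/-!
Build a greedy chain of intervals `u₀, u₁, …`: `uₙ₊₁` is, among the intervals starting no later
than the first left endpoint beyond `b uₙ`, one reaching furthest to the right. Right endpoints
strictly increase along the chain, and an interval two steps further on starts after `b uₙ` ends.
Consequently the chain intervals met by any interval `[a v, b v]` form a run of one, two or three
consecutive ones, the middle one being met whenever the last is. Coloring the chain alternately,
the second interval of that run (or the only one) has a color occurring once in `N[v]`.
-/

namespace ConflictFree

variable {V : Type*}

section Parity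

variable {G : SimpleGraph V} {s : ℕ → Option V}

/-- The indices `n` with `s n ∈ N[v]` form a run `{i}`, `{i, i+1}` or `{i, i+1, i+2}`. -/
def ShortRunAt (G : SimpleGraph V) (s : ℕ → Option V) (v : V) : Prop :=
  ∃ i, (∃ u ∈ s i, u ∈ insert v (G.neighborSet v)) ∧
    ∀ m, ∀ w ∈ s m, w ∈ insert v (G.neighborSet v) →
      i ≤ m ∧ m ≤ i + 2 ∧ (m = i + 2 → ∃ u ∈ s (i + 1), u ∈ insert v (G.neighborSet v))

open Classical in
noncomputable def parityColoring (s : ℕ → Option V) (w : V) : Option (Fin 2) :=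
  if h : ∃ n, w ∈ s n then some (Fin.ofNat 2 (Nat.find h)) else none

lemma parityColoring_of_mem (hs : ∀ m n w, w ∈ s m → w ∈ s n → m = n) {n : ℕ} {w : V}
    (hw : w ∈ s n) : parityColoring s w = some (Fin.ofNat 2 n) := by
  classical
  have h : ∃ n, w ∈ s n := ⟨n, hw⟩
  rw [parityColoring, dif_pos h, hs _ _ _ (Nat.find_spec h) hw]

lemma exists_mem_of_parityColoring_eq_some {w : V} {c : Fin 2} (h : parityColoring s w = some c) :
    ∃ n, w ∈ s n ∧ Fin.ofNat 2 n = c := by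
  classical
  rw [parityColoring] at h
  split_ifs at h with hex
  exact ⟨Nat.find hex, Nat.find_spec hex, Option.some_injective _ h⟩

lemma isCFColoring_parityColoring (hs : ∀ m n w, w ∈ s m → w ∈ s n → m = n)
    (hrun : ∀ v, ShortRunAt G s v) : IsCFColoring G (parityColoring s) := by
  intro v
  obtain ⟨i, ⟨u, hu, huv⟩, hi⟩ := hrun v
  suffices key : ∀ j, ∀ x ∈ s j, x ∈ insert v (G.neighborSet v) →
      (∀ m, ∀ w ∈ s m, w ∈ insert v (G.neighborSet v) → m % 2 = j % 2 → m = j) →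
      ∃ x ∈ insert v (G.neighborSet v), (parityColoring s x).isSome ∧
        ∀ w ∈ insert v (G.neighborSet v), parityColoring s w = parityColoring s x → w = x by
    by_cases hnext : ∃ u₁ ∈ s (i + 1), u₁ ∈ insert v (G.neighborSet v)
    · obtain ⟨u₁, hu₁, hu₁v⟩ := hnext
      refine key (i + 1) u₁ hu₁ hu₁v fun m w hw hwv hpar => ?_
      have := hi m w hw hwv
      omega
    · refine key i u hu huv fun m w hw hwv hpar => ?_
      obtain ⟨him, hmi, hlast⟩ := hi m w hw hwv
      have : m ≠ i + 2 := fun h => hnext (hlast h)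
      omega
  intro j x hx hxv honly
  have hχx := parityColoring_of_mem hs hx
  refine ⟨x, hxv, by rw [hχx]; rfl, fun w hwv hχ => ?_⟩
  rw [hχx] at hχ
  obtain ⟨m, hw, hmj⟩ := exists_mem_of_parityColoring_eq_some hχ
  have hpar : m % 2 = j % 2 := by simpa [Fin.ext_iff] using hmj
  rw [honly m w hw hwv hpar] at hw
  exact Option.mem_unique hw hx

end Parity

section Greedy

variable {a b : V → ℝ}

/-- What the argument uses of the greedy choice after `r`: the interval reaching furthest right
among those starting no later than the first left endpoint beyond `r`. -/
def IsGreedyStep (a b : V → ℝ) (r : ℝ) (u : V) : Prop :=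
  r < b u ∧ (∀ w, r < a w → a u ≤ a w) ∧ ∀ w, a w ≤ r → b w ≤ b u

lemma exists_isGreedyStep [Finite V] (hab : ∀ v, a v ≤ b v) {r : ℝ} {v : V} (hv : r < a v) :
    ∃ u, IsGreedyStep a b r u := by
  obtain ⟨v₀, hv₀, hmin⟩ := Set.exists_min_image {w | r < a w} a (Set.toFinite _) ⟨v, hv⟩
  obtain ⟨u, hu, hmax⟩ :=
    Set.exists_max_image {w | a w ≤ a v₀} b (Set.toFinite _) ⟨v₀, le_refl (a v₀)⟩
  refine ⟨u, ?_, fun w hw => hu.trans (hmin w hw), fun w hw => hmax w (hw.trans hv₀.le)⟩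
  calc r < a v₀ := hv₀
    _ ≤ b v₀ := hab v₀
    _ ≤ b u := hmax v₀ (le_refl (a v₀))

open Classical in
noncomputable def greedyStep (a b : V → ℝ) (r : ℝ) : Option V :=
  if h : ∃ u, IsGreedyStep a b r u then some h.choose else none

lemma isGreedyStep_of_mem_greedyStep {r : ℝ} {u : V} (hu : u ∈ greedyStep a b r) :
    IsGreedyStep a b r u := by
  rw [greedyStep] at hu
  split_ifs at hu with h
  · exact Option.some_injective _ hu ▸ h.choose_spec
  · cases hu

lemma greedyStep_isSome [Finite V] (hab : ∀ v, a v ≤ b v) {r : ℝ} {v : V} (hv : r < a v) :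
    (greedyStep a b r).isSome := by
  rw [greedyStep, dif_pos (exists_isGreedyStep hab hv)]
  rfl

/-- Started from some `r₀` below every left endpoint; `none` once the chain has stopped. -/
noncomputable def greedyChain (a b : V → ℝ) (r₀ : ℝ) : ℕ → Option V
  | 0 => greedyStep a b r₀
  | n + 1 => (greedyChain a b r₀ n).bind fun u => greedyStep a b (b u)

variable {r₀ : ℝ}

lemma mem_greedyChain_succ {n : ℕ} {w : V} :
    w ∈ greedyChain a b r₀ (n + 1) ↔ ∃ u ∈ greedyChain a b r₀ n, w ∈ greedyStep a b (b u) :=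
  Option.mem_bind_iff

lemma isGreedyStep_of_mem_greedyChain_succ {n : ℕ} {u w : V} (hu : u ∈ greedyChain a b r₀ n)
    (hw : w ∈ greedyChain a b r₀ (n + 1)) : IsGreedyStep a b (b u) w := by
  obtain ⟨u', hu', hw'⟩ := mem_greedyChain_succ.1 hw
  exact Option.mem_unique hu' hu ▸ isGreedyStep_of_mem_greedyStep hw'

lemma exists_mem_greedyChain_of_le {m n : ℕ} (hmn : m ≤ n) {w : V}
    (hw : w ∈ greedyChain a b r₀ n) : ∃ u, u ∈ greedyChain a b r₀ m := by
  induction n, hmn using Nat.le_induction generalizing w with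
  | base => exact ⟨w, hw⟩
  | succ n _ ih =>
    obtain ⟨u, hu, -⟩ := mem_greedyChain_succ.1 hw
    exact ih hu

lemma greedyChain_b_lt {m n : ℕ} (hmn : m < n) {u w : V} (hu : u ∈ greedyChain a b r₀ m)
    (hw : w ∈ greedyChain a b r₀ n) : b u < b w := by
  induction n, hmn using Nat.le_induction generalizing w with
  | base => exact (isGreedyStep_of_mem_greedyChain_succ hu hw).1
  | succ n _ ih =>
    obtain ⟨u', hu', hw'⟩ := mem_greedyChain_succ.1 hw
    exact (ih hu').trans (isGreedyStep_of_mem_greedyStep hw').1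

lemma greedyChain_injective (m n : ℕ) (w : V) (hm : w ∈ greedyChain a b r₀ m)
    (hn : w ∈ greedyChain a b r₀ n) : m = n := by
  by_contra hne
  rcases Nat.lt_or_gt_of_ne hne with h | h
  · exact (greedyChain_b_lt h hm hn).false
  · exact (greedyChain_b_lt h hn hm).false

/-- Chain intervals two steps apart are disjoint: otherwise the later one would have been
a candidate for the intermediate step and would reach further than it. -/
lemma greedyChain_b_lt_a {j m : ℕ} (hjm : j + 2 ≤ m) {u w : V} (hu : u ∈ greedyChain a b r₀ j)
    (hw : w ∈ greedyChain a b r₀ m) : b u < a w := by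
  obtain ⟨u₁, hu₁⟩ := exists_mem_greedyChain_of_le (by omega : j + 1 ≤ m) hw
  by_contra! hwu
  have hle : b w ≤ b u₁ := (isGreedyStep_of_mem_greedyChain_succ hu hu₁).2.2 w hwu
  exact (greedyChain_b_lt (by omega) hu₁ hw).not_ge hle

lemma exists_mem_greedyChain_a_le_b [Finite V] (hab : ∀ v, a v ≤ b v) (hr₀ : ∀ v, r₀ < a v)
    (v : V) : ∃ n, ∃ u ∈ greedyChain a b r₀ n, a v ≤ b u := by
  by_contra! hbelow
  have hsome : ∀ n, ∃ u, u ∈ greedyChain a b r₀ n := by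
    intro n
    induction n with
    | zero => exact Option.isSome_iff_exists.1 (greedyStep_isSome hab (hr₀ v))
    | succ n ih =>
      obtain ⟨u, hu⟩ := ih
      obtain ⟨w, hw⟩ := Option.isSome_iff_exists.1 (greedyStep_isSome hab (hbelow n u hu))
      exact ⟨w, mem_greedyChain_succ.2 ⟨u, hu, hw⟩⟩
  choose f hf using hsome
  obtain ⟨m, n, hmn, hfmn⟩ := Finite.exists_ne_map_eq_of_infinite f
  exact hmn (greedyChain_injective m n _ (hf m) (hfmn ▸ hf n))

lemma greedyChain_a_le_of_forall_lt (hr₀ : ∀ v, r₀ < a v) {i : ℕ} {u v : V}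
    (hu : u ∈ greedyChain a b r₀ i)
    (hbefore : ∀ m < i, ∀ w ∈ greedyChain a b r₀ m, b w < a v) : a u ≤ a v := by
  cases i with
  | zero => exact (isGreedyStep_of_mem_greedyStep hu).2.1 v (hr₀ v)
  | succ j =>
    obtain ⟨w, hw, hu'⟩ := mem_greedyChain_succ.1 hu
    exact (isGreedyStep_of_mem_greedyStep hu').2.1 v (hbefore j j.lt_succ_self w hw)

lemma greedyChain_run_of_a_le_b {i m : ℕ} (him : i + 2 ≤ m) {u v w : V}
    (hu : u ∈ greedyChain a b r₀ i) (hvu : a v ≤ b u) (hw : w ∈ greedyChain a b r₀ m)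
    (hwv : a w ≤ b v) :
    m = i + 2 ∧ ∃ u₁ ∈ greedyChain a b r₀ (i + 1), a u₁ ≤ b v ∧ a v ≤ b u₁ := by
  obtain ⟨u₁, hu₁⟩ := exists_mem_greedyChain_of_le (by omega : i + 1 ≤ m) hw
  obtain ⟨hu₁u, hu₁a, hu₁b⟩ := isGreedyStep_of_mem_greedyChain_succ hu hu₁
  have huw : b u < a w := greedyChain_b_lt_a him hu hw
  have hvu₁ : b v ≤ b u₁ := hu₁b v hvu
  refine ⟨?_, u₁, hu₁, (hu₁a w huw).trans hwv, hvu.trans hu₁u.le⟩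
  by_contra hne
  have hu₁w : b u₁ < a w := greedyChain_b_lt_a (by omega) hu₁ hw
  linarith

end Greedy

lemma mem_insert_neighborSet_intervalGraph {a b : V → ℝ} (hab : ∀ v, a v ≤ b v) {v w : V} :
    w ∈ insert v ((intervalGraph a b).neighborSet v) ↔ a w ≤ b v ∧ a v ≤ b w := by
  rcases eq_or_ne w v with rfl | hwv
  · simp [hab w]
  · simp [intervalGraph, hwv, hwv.symm, and_comm]

lemma shortRunAt_greedyChain [Finite V] {a b : V → ℝ} (hab : ∀ v, a v ≤ b v) {r₀ : ℝ}
    (hr₀ : ∀ v, r₀ < a v) (v : V) : ShortRunAt (intervalGraph a b) (greedyChain a b r₀) v := by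
  classical
  have hdom := exists_mem_greedyChain_a_le_b hab hr₀ v
  obtain ⟨u, hu, hvu⟩ := Nat.find_spec hdom
  have hbefore : ∀ m < Nat.find hdom, ∀ w ∈ greedyChain a b r₀ m, b w < a v :=
    fun m hm w hw => not_le.1 fun h => Nat.find_min hdom hm ⟨w, hw, h⟩
  simp only [ShortRunAt, mem_insert_neighborSet_intervalGraph hab]
  refine ⟨Nat.find hdom, ⟨u, hu, ?_, hvu⟩, fun m w hw ⟨hwv, hvw⟩ => ?_⟩
  · exact (greedyChain_a_le_of_forall_lt hr₀ hu hbefore).trans (hab v)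
  have him : Nat.find hdom ≤ m := not_lt.1 fun h => (hbefore m h w hw).not_ge hvw
  rcases lt_or_ge m (Nat.find hdom + 2) with h | h
  · exact ⟨him, h.le, by omega⟩
  · obtain ⟨rfl, hmid⟩ := greedyChain_run_of_a_le_b h hu hvu hw hwv
    exact ⟨him, le_rfl, fun _ => hmid⟩

end ConflictFree

open ConflictFree in
theorem stmt12 {V : Type*} [Fintype V] (a b : V → ℝ) (hab : ∀ v : V, a v ≤ b v) :
    HasCFColoring (intervalGraph a b) 2 := by
  obtain ⟨L, hL⟩ := (Set.finite_range a).bddBelow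
  have hr₀ : ∀ v, L - 1 < a v := fun v => by linarith [hL ⟨v, rfl⟩]
  exact ⟨parityColoring (greedyChain a b (L - 1)),
    isCFColoring_parityColoring greedyChain_injective (shortRunAt_greedyChain hab hr₀)⟩
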